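/- arXiv:1506.00133 — 3 statements merged into one kernel-verified Lean document; each statement's English description precedes it below -/
import Mathlib

section
/- Let n, m ≥ 1, let f : ℤ/nℤ → ℤ/mℤ be congruence preserving, and let a_0, …, a_{n−1} ∈ ℤ/mℤ be its coefficients in the expansion f(x) = Σ_{k=0}^{n−1} a_k · C(x, k). Then for all k < n and every p with 1 ≤ p ≤ k, the element p (viewed in ℤ/mℤ) divides a_k in ℤ/mℤ. -/
/-- `ulcm k` is the least common multiple of `1, 2, …, k`, with `ulcm 0 = 1`. -/
def ulcm (k : ℕ) : ℕ := (Finset.Icc 1 k).lcm id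

/-- `mu m` is the largest prime power dividing `m`. -/
def mu (m : ℕ) : ℕ := m.primeFactors.sup fun p => p ^ m.factorization p

/-- `f : ZMod n → ZMod m` is congruence preserving. -/
def CongPres (n m : ℕ) (f : ZMod n → ZMod m) : Prop :=
  ∀ d : ℕ, ∀ hd : d ∣ m, ∀ a b : ℕ, a < n → b < n → a ≡ b [MOD d] →
    ZMod.castHom hd (ZMod d) (f a) = ZMod.castHom hd (ZMod d) (f b)

/-- `CP n m` is the number of congruence preserving functions `ZMod n → ZMod m`. -/
noncomputable def CP (n m : ℕ) : ℕ := Nat.card {f : ZMod n → ZMod m // CongPres n m f}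

/-!
Newton's formula gives `a k = Δ^k f (0)`, so it suffices to show that every prime power `q ^ t`
dividing `gcd p m` divides the integer `Δ^k F (0)`, where `F` lifts the values of `f` to `ℤ`;
then `gcd p m ∣ a k`, and `p` and `gcd p m` are associates in `ℤ/mℤ` by Bézout.

For the prime power, one proves by induction on `c` that `q ^ c ∣ Δ^k F` whenever `q ^ (s + c) ≤ k`
and `F` preserves congruences modulo `q ^ (s + t)` at precision `q ^ t` for all `t ≤ c`.
Write `F = φ + q G` where `φ j = F (j mod q ^ (s + 1))`. Since `(E - 1) ^ (q ^ r) ≡ E ^ (q ^ r) - 1`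
modulo `q`, each block of `q ^ (s + 1)` differences of the periodic `φ` gains a factor `q`, and
`c + 1 ≤ q ^ c` such blocks fit into `k`; while `G` satisfies the hypothesis for `(s + 1, c)`.
-/

open Finset Function
open scoped fwdDiff

section FwdDiff

variable {M G : Type*} [AddCommMonoid M] [AddCommGroup G] (h : M)

lemma fwdDiff_iter_congr {f g : M → G} {n : ℕ} {y : M}
    (hfg : ∀ i ≤ n, f (y + i • h) = g (y + i • h)) : Δ_[h] ^[n] f y = Δ_[h] ^[n] g y := by
  simp only [fwdDiff_iter_eq_sum_shift]
  exact sum_congr rfl fun i hi => by rw [hfg i (Nat.lt_succ_iff.mp (mem_range.mp hi))]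

lemma fwdDiff_iter_comp_addMonoidHom {H : Type*} [AddCommGroup H] (φ : G →+ H) (f : M → G)
    (n : ℕ) (y : M) : Δ_[h] ^[n] (fun x => φ (f x)) y = φ (Δ_[h] ^[n] f y) := by
  simp only [fwdDiff_iter_eq_sum_shift, map_sum, map_zsmul]

lemma Function.Periodic.fwdDiff_iter {f : M → G} {c : M} (hf : Periodic f c) (n : ℕ) :
    Periodic (Δ_[h] ^[n] f) c := fun y => by
  rw [← fwdDiff_iter_comp_add, hf.funext]

end FwdDiff

lemma fwdDiff_iter_sum_mul_choose_zero {R : Type*} [Ring R] {n : ℕ} (a : Fin n → R) (k : Fin n) :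
    Δ_[1] ^[k] (fun j : ℕ => ∑ l : Fin n, a l * (j.choose l : R)) 0 = a k := by
  have hchoose (l : ℕ) :
      Δ_[1] ^[k] (fun j : ℕ => (j.choose l : R)) 0 = if (k : ℕ) = l then 1 else 0 := by
    have := fwdDiff_iter_comp_addMonoidHom 1 (Int.castAddHom R) (fun j : ℕ => (j.choose l : ℤ)) k 0
    simp only [Int.coe_castAddHom, Int.cast_natCast] at this
    rw [this, fwdDiff_iter_choose_zero]
    split_ifs <;> simp
  have hsum : (fun j : ℕ => ∑ l : Fin n, a l * (j.choose l : R))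
      = ∑ l : Fin n, a l • fun j : ℕ => (j.choose l : R) := by
    ext j; simp
  simp [hsum, fwdDiff_iter_const_smul, hchoose, Fin.val_eq_val]

section PrimePower

variable {q : ℕ}

lemma prime_dvd_fwdDiff_iter_prime_pow_of_periodic (hq : q.Prime) {r : ℕ} {φ : ℕ → ℤ}
    (hφ : Periodic φ (q ^ r)) (y : ℕ) : (q : ℤ) ∣ Δ_[1] ^[q ^ r] φ y := by
  have := Fact.mk hq
  have hQ : q ^ r ≠ 0 := pow_ne_zero _ hq.ne_zero
  rw [← ZMod.intCast_zmod_eq_zero_iff_dvd, fwdDiff_iter_eq_sum_shift, Int.cast_sum,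
    sum_eq_add_of_mem 0 (q ^ r) (by simp) (by simp) hQ.symm fun i hi hi' => ?_]
  · simp [hφ y, ZMod.pow_card_pow]
  · have : ((q ^ r).choose i : ZMod q) = 0 :=
      (ZMod.natCast_eq_zero_iff _ _).2 (hq.dvd_choose_pow hi'.1 hi'.2)
    simp [this]

lemma pow_dvd_fwdDiff_iter_of_periodic (hq : q.Prime) {r : ℕ} (c : ℕ) {φ : ℕ → ℤ}
    (hφ : Periodic φ (q ^ r)) {k : ℕ} (hk : q ^ r * c ≤ k) (y : ℕ) :
    (q : ℤ) ^ c ∣ Δ_[1] ^[k] φ y := by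
  induction c generalizing φ k with
  | zero => simp
  | succ c ih =>
    obtain ⟨ψ, hψ⟩ : ∃ ψ : ℕ → ℤ, Δ_[1] ^[q ^ r] φ = (q : ℤ) • ψ :=
      ⟨fun x => Δ_[1] ^[q ^ r] φ x / q, funext fun x =>
        (Int.mul_ediv_cancel' (prime_dvd_fwdDiff_iter_prime_pow_of_periodic hq hφ x)).symm⟩
    have hψper : Periodic ψ (q ^ r) := fun x => by
      have := (hφ.fwdDiff_iter 1 (q ^ r)) x
      rw [hψ] at this
      exact mul_left_cancel₀ (by exact_mod_cast hq.ne_zero) this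
    obtain ⟨k, rfl⟩ : ∃ k', k = k' + q ^ r := ⟨k - q ^ r, by rw [mul_add_one] at hk; omega⟩
    rw [iterate_add_apply, hψ, fwdDiff_iter_const_smul, Pi.smul_apply, smul_eq_mul, pow_succ']
    exact mul_dvd_mul_left _ (ih hψper (by rw [mul_add_one] at hk; omega))

lemma pow_dvd_fwdDiff_iter_of_modEq (hq : q.Prime) {c s k : ℕ} {F : ℕ → ℤ}
    (hk : q ^ (s + c) ≤ k)
    (hF : ∀ t ≤ c, ∀ i j, i ≡ j [MOD q ^ (s + t)] → (q : ℤ) ^ t ∣ F i - F j) (y : ℕ) :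
    (q : ℤ) ^ c ∣ Δ_[1] ^[k] F y := by
  induction c generalizing s F with
  | zero => simp
  | succ c ih =>
    set φ : ℕ → ℤ := fun j => F (j % q ^ (s + 1))
    have hφ : Periodic φ (q ^ (s + 1)) := fun j => by simp [φ]
    obtain ⟨G, hG⟩ : ∃ G : ℕ → ℤ, ∀ j, F j - φ j = q * G j := by
      choose G hG using fun j => by
        simpa using hF 1 (by omega) j (j % q ^ (s + 1)) (Nat.mod_modEq _ _).symm
      exact ⟨G, hG⟩
    have hFφG : F = φ + (q : ℤ) • G := funext fun j => by
      simp [← hG j]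
    have hGk : q ^ (s + 1 + c) ≤ k := by rwa [add_right_comm, add_assoc]
    have hG' : ∀ t ≤ c, ∀ i j, i ≡ j [MOD q ^ (s + 1 + t)] → (q : ℤ) ^ t ∣ G i - G j := by
      intro t ht i j hij
      have hφij : φ i = φ j :=
        congrArg F (hij.of_dvd (pow_dvd_pow q (by omega : s + 1 ≤ s + 1 + t)))
      have := hF (t + 1) (by omega) i j (by rwa [← add_assoc, add_right_comm])
      rw [pow_succ', show F i - F j = q * (G i - G j) by
        linear_combination hG i - hG j + hφij] at this
      exact (mul_dvd_mul_iff_left (by exact_mod_cast hq.ne_zero)).1 this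
    have hφk : q ^ (s + 1) * (c + 1) ≤ k :=
      calc q ^ (s + 1) * (c + 1) ≤ q ^ (s + 1) * q ^ c :=
            Nat.mul_le_mul_left _ (Nat.lt_pow_self hq.one_lt)
        _ ≤ k := by rw [← pow_add]; exact hGk
    rw [hFφG, fwdDiff_iter_add, fwdDiff_iter_const_smul, Pi.add_apply, Pi.smul_apply, smul_eq_mul,
      pow_succ']
    exact dvd_add (pow_succ' (q : ℤ) c ▸ pow_dvd_fwdDiff_iter_of_periodic hq (c + 1) hφ hφk y)
      (mul_dvd_mul_left _ (ih hGk hG'))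

end PrimePower

lemma exists_modEq_retraction {M K : ℕ} (hM : 0 < M) (hMK : M ≤ K + 1) :
    ∃ r : ℕ → ℕ, (∀ j, r j ≤ K) ∧ (∀ j ≤ K, r j = j) ∧ ∀ j, r j ≡ j [MOD M] := by
  set B := K + 1 - M
  refine ⟨fun j => if j ≤ K then j else B + (j - B) % M, fun j => ?_, fun j hj => if_pos hj,
    fun j => ?_⟩ <;> dsimp only
  · split_ifs
    · assumption
    · have := Nat.mod_lt (j - B) hM; omega
  · split_ifs with hj
    · rfl
    · calc B + (j - B) % M ≡ B + (j - B) [MOD M] := (Nat.mod_modEq _ _).add_left B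
        _ = j := by omega

namespace ZMod

lemma natCast_dvd_iff_dvd_val {m d : ℕ} [NeZero m] (hd : d ∣ m) (x : ZMod m) :
    (d : ZMod m) ∣ x ↔ d ∣ x.val := by
  constructor
  · rintro ⟨y, rfl⟩
    rw [val_mul, Nat.dvd_mod_iff hd, val_natCast]
    exact ((Nat.dvd_mod_iff hd).2 dvd_rfl).mul_right _
  · rintro ⟨u, hu⟩
    exact ⟨u, by rw [← natCast_zmod_val x, hu, Nat.cast_mul]⟩

lemma natCast_dvd_natCast_gcd (p m : ℕ) : (p : ZMod m) ∣ (p.gcd m : ZMod m) :=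
  ⟨Nat.gcdA p m, by simpa using congrArg (Int.cast : ℤ → ZMod m) (Nat.gcd_eq_gcd_ab p m)⟩

end ZMod

namespace CongPres

variable {n m : ℕ} {f : ZMod n → ZMod m} [NeZero m]

lemma dvd_val_sub (hcp : CongPres n m f) {d a b : ℕ} (hd : d ∣ m) (ha : a < n) (hb : b < n)
    (hab : a ≡ b [MOD d]) : (d : ℤ) ∣ (f a).val - (f b).val := by
  have := hcp d hd b a hb ha hab.symm
  rwa [ZMod.castHom_apply, ZMod.castHom_apply, ZMod.cast_eq_val, ZMod.cast_eq_val,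
    ← Int.cast_natCast, ← Int.cast_natCast (R := ZMod d) (f a).val,
    ZMod.intCast_eq_intCast_iff_dvd_sub] at this

lemma prime_pow_dvd_coeff (hcp : CongPres n m f) {a : Fin n → ZMod m}
    (hf : ∀ x : ZMod n, f x = ∑ k : Fin n, a k * (Nat.choose x.val k : ZMod m)) (k : Fin n)
    {q t : ℕ} (hq : q.Prime) (hqm : q ^ t ∣ m) (hqk : q ^ t ≤ k) :
    ((q ^ t : ℕ) : ZMod m) ∣ a k := by
  -- `f` is only constrained on `[0, n)`: fold `ℕ` onto `[0, k]`, keeping residues mod `q ^ t`.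
  obtain ⟨r, hrk, hr_id, hr_mod⟩ :=
    exists_modEq_retraction (pow_pos hq.pos t) (hqk.trans (k : ℕ).le_succ)
  set F : ℕ → ℤ := fun j => (f (r j)).val
  have hF : ∀ t' ≤ t, ∀ i j, i ≡ j [MOD q ^ (0 + t')] → (q : ℤ) ^ t' ∣ F i - F j := by
    intro t' ht' i j hij
    rw [zero_add] at hij
    have hdvd : q ^ t' ∣ q ^ t := pow_dvd_pow q ht'
    have hrij : r i ≡ r j [MOD q ^ t'] :=
      ((hr_mod i).of_dvd hdvd).trans (hij.trans ((hr_mod j).of_dvd hdvd).symm)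
    simpa only [Nat.cast_pow] using hcp.dvd_val_sub (hdvd.trans hqm) ((hrk i).trans_lt k.isLt)
      ((hrk j).trans_lt k.isLt) hrij
  obtain ⟨u, hu⟩ := pow_dvd_fwdDiff_iter_of_modEq hq (s := 0) (by simpa using hqk) hF 0
  have hak : a k = ((Δ_[1] ^[k] F 0 : ℤ) : ZMod m) := by
    change a k = Int.castAddHom (ZMod m) (Δ_[1] ^[k] F 0)
    rw [← fwdDiff_iter_comp_addMonoidHom 1 (Int.castAddHom (ZMod m)),
      ← fwdDiff_iter_sum_mul_choose_zero a k]
    refine fwdDiff_iter_congr 1 fun i hi => ?_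
    simp [F, hr_id i hi, hf, Nat.mod_eq_of_lt (hi.trans_lt k.isLt)]
  exact ⟨u, by rw [hak, hu]; push_cast; ring⟩

end CongPres

theorem stmt_8_general (n m : ℕ) (hm : 1 ≤ m) (f : ZMod n → ZMod m)
    (hcp : CongPres n m f) (a : Fin n → ZMod m)
    (hf : ∀ x : ZMod n, f x = ∑ k : Fin n, a k * (Nat.choose x.val k : ZMod m)) :
    ∀ k : Fin n, ∀ p : ℕ, 1 ≤ p → p ≤ (k : ℕ) → (p : ZMod m) ∣ a k := by
  intro k p hp hpk
  have : NeZero m := ⟨by omega⟩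
  have hgcd : p.gcd m ∣ (a k).val := by
    refine (Nat.dvd_iff_prime_pow_dvd_dvd _ _).2 fun q t hq hqt => ?_
    have hqm := hqt.trans (p.gcd_dvd_right m)
    have hqk := (Nat.le_of_dvd hp (hqt.trans (p.gcd_dvd_left m))).trans hpk
    exact (ZMod.natCast_dvd_iff_dvd_val hqm _).1 (hcp.prime_pow_dvd_coeff hf k hq hqm hqk)
  exact (ZMod.natCast_dvd_natCast_gcd p m).trans
    ((ZMod.natCast_dvd_iff_dvd_val (p.gcd_dvd_right m) _).2 hgcd)

theorem stmt_8 (n m : ℕ) (hn : 1 ≤ n) (hm : 1 ≤ m) (f : ZMod n → ZMod m)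
    (hcp : CongPres n m f) (a : Fin n → ZMod m)
    (hf : ∀ x : ZMod n, f x = ∑ k : Fin n, a k * (Nat.choose x.val k : ZMod m)) :
    ∀ k : Fin n, ∀ p : ℕ, 1 ≤ p → p ≤ (k : ℕ) → (p : ZMod m) ∣ a k :=
  stmt_8_general n m hm f hcp a hf
end

section
/- Let n ≥ 1 and m ≥ 2. A function f : ℤ/nℤ → ℤ/mℤ is congruence preserving if and only if there exist p < min(n, μ(m)) and elements a_0, …, a_p ∈ ℤ/mℤ such that lcm(k) (viewed in ℤ/mℤ) divides a_k in ℤ/mℤ for all k ≤ p, and f(x) = Σ_{k=0}^{p} a_k · C(x, k) in ℤ/mℤ for every x ∈ {0, …, n−1}. -/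
/-!
Write `f` in the binomial basis: by the Gregory–Newton formula
`f x = ∑ k, Δᵏf(0) · C(x, k)`. If `f` is congruence preserving, then for every `t ∣ m` the `t`-th
differences of `f` are divisible by `t`, because `t ∣ C(t, i) · gcd(i, t)` while
`f(x + i) ≡ f(x)` modulo `gcd(i, t)`. Applied to the prime powers `q ^ s ≤ k` dividing `m`, this
makes `Δᵏf(0)` a multiple of `lcm(k)` in `ℤ/mℤ`; once `k ≥ μ(m)` it vanishes, since then
`m ∣ lcm(k)`. Conversely, `x ↦ lcm(k) · C(x, k)` preserves congruences: by Vandermonde,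
`lcm(k) · (C(x + c, k) - C(x, k))` is a sum of terms `lcm(k) · C(x, i) · C(c, j)` with
`1 ≤ j ≤ k`, each divisible by `c` since `j · C(c, j) = c · C(c - 1, j - 1)` and `j ∣ lcm(k)`.
-/

open Finset

lemma le_of_prime_pow_dvd_ulcm {p s k : ℕ} (hp : p.Prime) (hs : s ≠ 0) (h : p ^ s ∣ ulcm k) :
    p ^ s ≤ k := by
  have hlog : s ≤ p.log k := by
    rw [← Nat.factorization_lcmUpto k hp]
    exact (hp.pow_dvd_iff_le_factorization (Nat.lcmUpto_ne_zero k)).1 h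
  rcases eq_or_ne k 0 with rfl | hk
  · simp at hlog; omega
  · exact Nat.pow_le_of_le_log hk hlog

lemma le_mu_of_prime_pow_dvd {p s m : ℕ} (hm : m ≠ 0) (hp : p.Prime) (hs : s ≠ 0)
    (h : p ^ s ∣ m) : p ^ s ≤ mu m := by
  have hpm : p ∈ m.primeFactors := Nat.mem_primeFactors.2 ⟨hp, (dvd_pow_self p hs).trans h, hm⟩
  calc p ^ s ≤ p ^ m.factorization p :=
        Nat.pow_le_pow_right hp.pos ((hp.pow_dvd_iff_le_factorization hm).1 h)
    _ ≤ mu m := Finset.le_sup (f := fun p => p ^ m.factorization p) hpm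

lemma mu_pos {m : ℕ} (hm : 2 ≤ m) : 0 < mu m := by
  obtain ⟨p, hp, hpm⟩ := Nat.exists_prime_and_dvd (by omega : m ≠ 1)
  calc 0 < p ^ 1 := by simpa using hp.pos
    _ ≤ mu m := le_mu_of_prime_pow_dvd (by omega) hp one_ne_zero (by simpa using hpm)

lemma dvd_ulcm_of_mu_le {m k : ℕ} (hm : m ≠ 0) (hk : mu m ≤ k) : m ∣ ulcm k := by
  refine (Nat.dvd_iff_prime_pow_dvd_dvd _ _).2 fun p s hp hps => ?_
  rcases eq_or_ne s 0 with rfl | hs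
  · simp
  · exact Finset.dvd_lcm <| Finset.mem_Icc.2
      ⟨Nat.one_le_pow _ _ hp.pos, (le_mu_of_prime_pow_dvd hm hp hs hps).trans hk⟩

lemma Nat.dvd_choose_mul_gcd (t i : ℕ) : t ∣ t.choose i * i.gcd t := by
  have hi : t ∣ t.choose i * i := by
    rcases i with _ | i
    · simp
    rcases t with _ | t
    · simp
    exact ⟨t.choose i, by rw [Nat.add_one_mul_choose_eq]⟩
  simpa [Nat.gcd_mul_left] using Nat.dvd_gcd hi (dvd_mul_left t (t.choose i))

lemma dvd_ulcm_mul_choose {c j k : ℕ} (hj : j ≠ 0) (hjk : j ≤ k) : c ∣ ulcm k * c.choose j := by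
  obtain ⟨e, he⟩ : j ∣ ulcm k := Finset.dvd_lcm (Finset.mem_Icc.2 ⟨by omega, hjk⟩)
  obtain ⟨j, rfl⟩ := Nat.exists_eq_add_one_of_ne_zero hj
  rcases c with _ | c
  · simp
  refine ⟨e * c.choose j, ?_⟩
  rw [he, mul_right_comm, mul_comm _ ((c + 1).choose _), ← Nat.add_one_mul_choose_eq]
  ring

lemma ulcm_mul_choose_add_modEq (a c k : ℕ) :
    ulcm k * (a + c).choose k ≡ ulcm k * a.choose k [MOD c] := by
  have hsplit : (a + c).choose k = a.choose k + ∑ i ∈ range k, a.choose i * c.choose (k - i) := by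
    rw [Nat.add_choose_eq, Finset.Nat.sum_antidiagonal_eq_sum_range_succ_mk, sum_range_succ]
    simp [add_comm]
  rw [hsplit, mul_add]
  refine Nat.ModEq.add_left _ (Nat.modEq_zero_iff_dvd.2 ?_)
  rw [mul_sum]
  refine dvd_sum fun i hi => ?_
  have := mem_range.1 hi
  rw [mul_left_comm]
  exact dvd_mul_of_dvd_right (dvd_ulcm_mul_choose (by omega) (by omega)) _

lemma Nat.ModEq.ulcm_mul_choose {d a b : ℕ} (h : a ≡ b [MOD d]) (k : ℕ) :
    ulcm k * a.choose k ≡ ulcm k * b.choose k [MOD d] := by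
  wlog hab : a ≤ b generalizing a b
  · exact (this h.symm (by omega)).symm
  obtain ⟨c, rfl⟩ := Nat.exists_eq_add_of_le hab
  have hdc : d ∣ c := by simpa using (Nat.modEq_iff_dvd' hab).1 h
  exact ((ulcm_mul_choose_add_modEq a c k).of_dvd hdc).symm

lemma Nat.ModEq.natCast_dvd_sub {R : Type*} [CommRing R] {d a b : ℕ} (h : a ≡ b [MOD d]) :
    (d : R) ∣ (a : R) - b := by
  simpa using map_dvd (Int.castRingHom R) h.symm.dvd

lemma ZMod.natCast_dvd_iff_dvd_val_s12 {m d : ℕ} [NeZero m] (hd : d ∣ m) (y : ZMod m) :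
    (d : ZMod m) ∣ y ↔ d ∣ y.val := by
  constructor
  · rintro ⟨z, rfl⟩
    rw [ZMod.val_mul, Nat.dvd_mod_iff hd, ZMod.val_natCast]
    exact ((Nat.dvd_mod_iff hd).2 dvd_rfl).mul_right _
  · rintro ⟨c, hc⟩
    exact ⟨c, by rw [← ZMod.natCast_zmod_val y, hc, Nat.cast_mul]⟩

lemma ZMod.natCast_dvd_natCast_gcd_s12 (c m : ℕ) : (c : ZMod m) ∣ (c.gcd m : ZMod m) :=
  ⟨c.gcdA m, by simpa using congrArg (Int.cast : ℤ → ZMod m) (Nat.gcd_eq_gcd_ab c m)⟩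

lemma ZMod.castHom_eq_castHom_iff {m d : ℕ} [NeZero m] (hd : d ∣ m) (x y : ZMod m) :
    ZMod.castHom hd (ZMod d) x = ZMod.castHom hd (ZMod d) y ↔ (d : ZMod m) ∣ x - y := by
  rw [← sub_eq_zero, ← map_sub, ZMod.castHom_apply, ZMod.cast_eq_val, ZMod.natCast_eq_zero_iff,
    ZMod.natCast_dvd_iff_dvd_val_s12 hd]

lemma congPres_iff {n m : ℕ} [NeZero m] (f : ZMod n → ZMod m) :
    CongPres n m f ↔ ∀ d, d ∣ m → ∀ a b : ℕ, a < n → b < n → a ≡ b [MOD d] →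
      (d : ZMod m) ∣ f a - f b :=
  forall₂_congr fun _ hd => by simp only [ZMod.castHom_eq_castHom_iff hd]

lemma congPres_of_forall_eq_sum {n m p : ℕ} [NeZero m] {f : ZMod n → ZMod m}
    {a : ℕ → ZMod m} (ha : ∀ k ≤ p, (ulcm k : ZMod m) ∣ a k)
    (hf : ∀ x : ZMod n, f x = ∑ k ∈ range (p + 1), a k * (x.val.choose k : ZMod m)) :
    CongPres n m f := by
  refine (congPres_iff f).2 fun d _ x y hx hy hxy => ?_
  rw [hf, hf, ZMod.val_cast_of_lt hx, ZMod.val_cast_of_lt hy, ← sum_sub_distrib]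
  refine dvd_sum fun k hk => ?_
  obtain ⟨t, ht⟩ := ha k (Nat.lt_succ_iff.1 (mem_range.1 hk))
  have := (hxy.ulcm_mul_choose k).natCast_dvd_sub (R := ZMod m)
  push_cast at this
  rw [ht, ← mul_sub, mul_comm _ t, mul_assoc, mul_sub]
  exact dvd_mul_of_dvd_right this t

lemma fwdDiff_iter_mem {M G : Type*} [AddCommMonoid M] [AddCommGroup G] (S : AddSubgroup G)
    (h : M) (g : M → G) (r : ℕ) (y : M) (hg : ∀ i ≤ r, g (y + i • h) ∈ S) :
    (fwdDiff h)^[r] g y ∈ S := by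
  rw [fwdDiff_iter_eq_sum_shift]
  exact S.sum_mem fun i hi => S.zsmul_mem (hg i (Nat.lt_succ_iff.1 (mem_range.1 hi))) _

lemma natCast_dvd_fwdDiff_iter_self {R : Type*} [CommRing R] {t : ℕ} (ht : t ≠ 0) (g : ℕ → R)
    (x : ℕ) (hg : ∀ i ≤ t, (i.gcd t : R) ∣ g (x + i) - g x) : (t : R) ∣ (fwdDiff 1)^[t] g x := by
  obtain ⟨s, rfl⟩ := Nat.exists_eq_add_one_of_ne_zero ht
  have hconst : (fwdDiff 1)^[s + 1] g = (fwdDiff 1)^[s + 1] (fun i => g i - g x) := by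
    rw [Function.iterate_succ_apply, Function.iterate_succ_apply]
    congr 1
    ext i
    simp [fwdDiff]
  rw [hconst, fwdDiff_iter_eq_sum_shift]
  refine dvd_sum fun i hi => ?_
  obtain ⟨u, hu⟩ := hg i (Nat.lt_succ_iff.1 (mem_range.1 hi))
  obtain ⟨v, hv⟩ := Nat.dvd_choose_mul_gcd (s + 1) i
  have hv' := congrArg (Nat.cast : ℕ → R) hv
  refine ⟨(-1) ^ (s + 1 - i) * v * u, ?_⟩
  simp only [smul_eq_mul, mul_one, zsmul_eq_mul, hu]
  push_cast at hv' ⊢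
  linear_combination ((-1 : R) ^ (s + 1 - i) * u) * hv'

lemma CongPres.natCast_dvd_fwdDiff_iter {n m : ℕ} [NeZero m] {f : ZMod n → ZMod m}
    (hf : CongPres n m f) {t x : ℕ} (ht : t ∣ m) (hx : x + t < n) :
    (t : ZMod m) ∣ (fwdDiff 1)^[t] (fun i : ℕ => f i) x := by
  refine natCast_dvd_fwdDiff_iter_self (ne_zero_of_dvd_ne_zero (NeZero.ne m) ht) _ x
    fun i hi => (congPres_iff f).1 hf _ ((Nat.gcd_dvd_right i t).trans ht) _ _ (by omega)
      (by omega) ?_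
  simpa using (Nat.modEq_zero_iff_dvd.2 (Nat.gcd_dvd_left i t)).add_left x

def newtonCoeff {n m : ℕ} (f : ZMod n → ZMod m) (k : ℕ) : ZMod m :=
  (fwdDiff 1)^[k] (fun i : ℕ => f i) 0

lemma eq_sum_newtonCoeff_mul_choose {n m : ℕ} [NeZero n] (f : ZMod n → ZMod m) (x : ZMod n) :
    f x = ∑ k ∈ range n, newtonCoeff f k * (x.val.choose k : ZMod m) := by
  have hnewton := shift_eq_sum_fwdDiff_iter 1 (fun i : ℕ => f i) x.val 0
  simp only [zero_add, smul_eq_mul, mul_one, ZMod.natCast_zmod_val] at hnewton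
  rw [hnewton, ← sum_subset (range_subset_range.2 x.val_lt)]
  · simp [newtonCoeff, nsmul_eq_mul, mul_comm]
  · intro k _ hk
    rw [mem_range, not_lt] at hk
    simp [Nat.choose_eq_zero_of_lt hk]

lemma CongPres.ulcm_dvd_newtonCoeff {n m k : ℕ} [NeZero m] {f : ZMod n → ZMod m}
    (hf : CongPres n m f) (hk : k < n) : (ulcm k : ZMod m) ∣ newtonCoeff f k := by
  refine (ZMod.natCast_dvd_natCast_gcd_s12 (ulcm k) m).trans ?_
  rw [ZMod.natCast_dvd_iff_dvd_val_s12 (Nat.gcd_dvd_right _ _)]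
  refine (Nat.dvd_iff_prime_pow_dvd_dvd _ _).2 fun p s hp hps => ?_
  rcases eq_or_ne s 0 with rfl | hs
  · simp
  have hpm := hps.trans (Nat.gcd_dvd_right _ _)
  obtain ⟨r, rfl⟩ := Nat.exists_eq_add_of_le
    (le_of_prime_pow_dvd_ulcm hp hs (hps.trans (Nat.gcd_dvd_left _ _)))
  rw [← ZMod.natCast_dvd_iff_dvd_val_s12 hpm, ← Ideal.mem_span_singleton, newtonCoeff, add_comm,
    Function.iterate_add_apply]
  refine fwdDiff_iter_mem (Ideal.span {((p ^ s : ℕ) : ZMod m)}).toAddSubgroup 1 _ r 0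
    fun i hi => Ideal.mem_span_singleton.2 ?_
  simpa using hf.natCast_dvd_fwdDiff_iter hpm (x := i) (by omega)

lemma CongPres.newtonCoeff_eq_zero {n m k : ℕ} [NeZero m] {f : ZMod n → ZMod m}
    (hf : CongPres n m f) (hk : k < n) (hmk : mu m ≤ k) : newtonCoeff f k = 0 := by
  have hzero : (ulcm k : ZMod m) = 0 :=
    (ZMod.natCast_eq_zero_iff _ _).2 (dvd_ulcm_of_mu_le (NeZero.ne m) hmk)
  simpa [hzero] using hf.ulcm_dvd_newtonCoeff hk

theorem stmt_12 (n m : ℕ) (hn : 1 ≤ n) (hm : 2 ≤ m) (f : ZMod n → ZMod m) :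
    CongPres n m f ↔
      ∃ p : ℕ, p < min n (mu m) ∧ ∃ a : ℕ → ZMod m,
        (∀ k ≤ p, (ulcm k : ZMod m) ∣ a k) ∧
        ∀ x : ZMod n, f x = ∑ k ∈ Finset.range (p + 1), a k * (Nat.choose x.val k : ZMod m) := by
  have : NeZero n := ⟨by omega⟩
  have : NeZero m := ⟨by omega⟩
  refine ⟨fun hf => ?_, fun ⟨p, _, a, ha, hfa⟩ => congPres_of_forall_eq_sum ha hfa⟩
  have hmu := mu_pos hm
  refine ⟨min n (mu m) - 1, by omega, newtonCoeff f,
    fun k hk => hf.ulcm_dvd_newtonCoeff (by omega), fun x => ?_⟩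
  rw [eq_sum_newtonCoeff_mul_choose f x]
  refine (sum_subset (range_subset_range.2 (by omega)) fun k hkn hkp => ?_).symm
  rw [mem_range] at hkn hkp
  rw [hf.newtonCoeff_eq_zero hkn (by omega), zero_mul]
end

section
/- Let n ≥ 1, m ≥ 2, and consider the family of functions ℱ = { lcm(k) · P_k : 0 ≤ k < min(n, μ(m)) } from ℤ/nℤ to ℤ/mℤ. Then ℱ is ℤ/mℤ-linearly independent (equivalently, ℱ is a basis of the ℤ/mℤ-module of congruence preserving functions ℤ/nℤ → ℤ/mℤ, which it always generates) if and only if m has no prime divisor p with p < min(n, m). -/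
lemma ulcm_dvd_factorial (k : ℕ) : ulcm k ∣ k.factorial :=
  Finset.lcm_dvd fun i hi => by
    simp only [Finset.mem_Icc] at hi
    exact Nat.dvd_factorial hi.1 hi.2

lemma mu_le (m : ℕ) (hm : 0 < m) : mu m ≤ m := by
  apply Finset.sup_le
  intro p hp
  exact Nat.le_of_dvd hm (Nat.ordProj_dvd m p)

lemma pow_fact_le_mu {m p : ℕ} (hp : p ∈ m.primeFactors) :
    p ^ m.factorization p ≤ mu m := Finset.le_sup (f := fun p => p ^ m.factorization p) hp

lemma minFac_lt_mu (m : ℕ) (hm : 2 ≤ m) (hnp : ¬ m.Prime) : m.minFac < mu m := by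
  set q := m.minFac with hq
  have hqp : q.Prime := Nat.minFac_prime (by omega)
  have hm0 : m ≠ 0 := by omega
  have hqm : q ∣ m := Nat.minFac_dvd m
  have hqmem : q ∈ m.primeFactors := Nat.mem_primeFactors.mpr ⟨hqp, hqm, hm0⟩
  have he1 : 1 ≤ m.factorization q :=
    (Nat.Prime.pow_dvd_iff_le_factorization hqp hm0).mp (by simpa using hqm)
  rcases le_or_gt 2 (m.factorization q) with he | he
  · calc q < q ^ 2 := by nlinarith [hqp.two_le]
    _ ≤ q ^ m.factorization q := Nat.pow_le_pow_right hqp.pos he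
    _ ≤ mu m := pow_fact_le_mu hqmem
  · have he : m.factorization q = 1 := by omega
    obtain ⟨s, hs⟩ := hqm
    have hs2 : 2 ≤ s := by
      rcases Nat.lt_or_ge s 2 with h | h
      · interval_cases s
        · omega
        · simp only [mul_one] at hs; exact absurd (hs ▸ hqp) hnp
      · exact h
    set r := s.minFac with hr
    have hrp : r.Prime := Nat.minFac_prime (by omega)
    have hrm : r ∣ m := hs ▸ Dvd.dvd.mul_left (Nat.minFac_dvd s) q
    have hrmem : r ∈ m.primeFactors := Nat.mem_primeFactors.mpr ⟨hrp, hrm, hm0⟩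
    have hrq : q < r := by
      have hle : q ≤ r := Nat.minFac_le_of_dvd hrp.two_le hrm
      rcases eq_or_lt_of_le hle with h | h
      · exfalso
        obtain ⟨t, ht⟩ := Nat.minFac_dvd s
        have : q ^ 2 ∣ m := ⟨t, by rw [hs, ht, h]; ring⟩
        have := (Nat.Prime.pow_dvd_iff_le_factorization hqp hm0).mp this
        omega
      · exact h
    calc q < r := hrq
    _ ≤ r ^ m.factorization r := by
        have h1 := (Nat.Prime.pow_dvd_iff_le_factorization hrp hm0).mp
          (by rw [pow_one]; exact hrm)
        exact Nat.le_self_pow (by omega) r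
    _ ≤ mu m := pow_fact_le_mu hrmem

theorem stmt_14 (n m : ℕ) (hn : 1 ≤ n) (hm : 2 ≤ m) :
    ((∀ a : ℕ → ZMod m,
        (∀ x : ZMod n,
          ∑ k ∈ Finset.range (min n (mu m)),
            a k * ((ulcm k : ZMod m) * (Nat.choose x.val k : ZMod m)) = 0) →
        ∀ k < min n (mu m), a k = 0)
      ↔ ∀ p : ℕ, p.Prime → p ∣ m → ¬ p < min n m) := by
  haveI : NeZero n := ⟨by omega⟩
  haveI : NeZero m := ⟨by omega⟩
  constructor
  · -- independence → no small prime
    intro hind p hp hpm hlt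
    have hpn : p < n := lt_of_lt_of_le hlt (min_le_left _ _)
    have hpm' : p < m := lt_of_lt_of_le hlt (min_le_right _ _)
    -- m is not prime
    have hnp : ¬ m.Prime := fun h => by
      have := (Nat.prime_dvd_prime_iff_eq hp h).mp hpm
      omega
    set q := m.minFac with hqdef
    have hqp : q.Prime := Nat.minFac_prime (by omega)
    have hqm : q ∣ m := Nat.minFac_dvd m
    have hqn : q < n := lt_of_le_of_lt (Nat.minFac_le_of_dvd hp.two_le hpm) hpn
    have hqmu : q < mu m := minFac_lt_mu m hm hnp
    have hqM : q < min n (mu m) := lt_min hqn hqmu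
    -- the dependence
    set a : ℕ → ZMod m := fun k => if k = q then ((m / q : ℕ) : ZMod m) else 0 with ha
    have hkey : ((m / q : ℕ) : ZMod m) * ((ulcm q : ℕ) : ZMod m) = 0 := by
      rw [← Nat.cast_mul, ZMod.natCast_eq_zero_iff]
      obtain ⟨t, ht⟩ := Finset.dvd_lcm (f := id) (b := q)
        (Finset.mem_Icc.mpr ⟨hqp.one_lt.le, le_refl q⟩)
      have ht' : ulcm q = q * t := ht
      exact ⟨t, by rw [ht', ← mul_assoc, Nat.div_mul_cancel hqm]⟩
    have hsum : ∀ x : ZMod n,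
        ∑ k ∈ Finset.range (min n (mu m)),
          a k * ((ulcm k : ZMod m) * (Nat.choose x.val k : ZMod m)) = 0 := by
      intro x
      apply Finset.sum_eq_zero
      intro j hj
      rcases eq_or_ne j q with rfl | hne
      · simp only [ha, if_pos rfl]
        rw [← mul_assoc, hkey, zero_mul]
      · simp [ha, if_neg hne]
    have := hind a hsum q hqM
    simp only [ha, if_pos rfl] at this
    rw [ZMod.natCast_eq_zero_iff] at this
    have h1 : 0 < m / q := Nat.div_pos (Nat.le_of_dvd (by omega) hqm) hqp.pos
    have h2 : m / q < m := Nat.div_lt_self (by omega) hqp.one_lt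
    have := Nat.le_of_dvd h1 this
    omega
  · -- no small prime → independence
    intro hcop a hsum k
    induction k using Nat.strong_induction_on with
    | _ k ih =>
      intro hk
      have hkn : k < n := lt_of_lt_of_le hk (min_le_left _ _)
      have h := hsum (k : ZMod n)
      rw [ZMod.val_natCast_of_lt hkn] at h
      rw [Finset.sum_eq_single k] at h
      · rw [Nat.choose_self, Nat.cast_one, mul_one] at h
        -- ulcm k is coprime to m
        have hcoprime : Nat.Coprime (ulcm k) m := by
          rw [Nat.coprime_iff_gcd_eq_one]
          by_contra hg
          set g := Nat.gcd (ulcm k) m with hgdef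
          have hg2 : 2 ≤ g := by
            have : 0 < g := Nat.gcd_pos_of_pos_right _ (by omega)
            omega
          set r := g.minFac with hrdef
          have hrp : r.Prime := Nat.minFac_prime (by omega)
          have hr1 : r ∣ ulcm k := (Nat.minFac_dvd g).trans (Nat.gcd_dvd_left _ _)
          have hr2 : r ∣ m := (Nat.minFac_dvd g).trans (Nat.gcd_dvd_right _ _)
          have hrk : r ≤ k := (hrp.dvd_factorial).mp (hr1.trans (ulcm_dvd_factorial k))
          have : r < min n m := by
            have hmum : mu m ≤ m := mu_le m (by omega)
            omega
          exact hcop r hrp hr2 this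
        have hunit : IsUnit ((ulcm k : ℕ) : ZMod m) :=
          (ZMod.isUnit_iff_coprime _ _).mpr hcoprime
        exact (hunit.mul_left_eq_zero).mp h
      · intro b hb hbk
        rcases lt_or_gt_of_ne hbk with hlt | hgt
        · rw [ih b hlt (lt_trans hlt hk), zero_mul]
        · rw [Nat.choose_eq_zero_of_lt hgt, Nat.cast_zero, mul_zero, mul_zero]
      · intro hkmem
        exact absurd (Finset.mem_range.mpr hk) hkmem
end
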